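/- Small box L² bound on the sum's score: if S, T have mean zero, variances at most K, and X = S + Z_S, Y = T + Z_T with Z_S, Z_T ~ N(0,τ) independent, then for B ≥ 1, ∫∫ ρ̃(x+y)² 1{|x| ≤ B√τ, |y| ≤ B√τ} dx dy ≤ 16B⁴√τ·f₁(τ, K'), where ρ̃ is the score of X+Y, f₁(τ,K') = 8(3 + 2K'/τ)/(√τ e) with K' = Var(S+T) ≤ 4K a variance bound for S+T. -/

import Mathlib

/-!
Write `ρ̃ = p' / p` with `p z = E g(z - W)`, `W = S + T` and `g` the `N(0, 2τ)` density. By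
Chebyshev, half of the mass of `W` lies within `M = √(2K' + τ)` of the origin, so
`p z ≥ g(|z| + M) / 2`; splitting `E |W| g(z - W)` at `|W| = 2|z| + M` then gives
`|ρ̃ z| ≤ (3|z| + 2M) / (2τ)`. On the box, `|x + y| ≤ 2B√τ`, so the double integral is at most the
area `(2B√τ)²` times the square of this bound at `|z| = 2B√τ`.
-/

open MeasureTheory Real

/-- The centered Gaussian density with variance `t`. -/
noncomputable def gauss (t x : ℝ) : ℝ :=
  (Real.sqrt (2 * Real.pi * t))⁻¹ * Real.exp (-(x ^ 2) / (2 * t))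

section Gauss

variable {t : ℝ}

lemma gauss_pos (ht : 0 < t) (x : ℝ) : 0 < gauss t x := by
  unfold gauss
  positivity

lemma gauss_le_gauss_of_abs_le (ht : 0 < t) {x y : ℝ} (h : |x| ≤ |y|) :
    gauss t y ≤ gauss t x := by
  unfold gauss
  have hsq : x ^ 2 ≤ y ^ 2 := sq_le_sq.2 h
  gcongr

lemma gauss_le_gauss_zero (ht : 0 < t) (x : ℝ) : gauss t x ≤ gauss t 0 :=
  gauss_le_gauss_of_abs_le ht (by simp)

@[fun_prop]
lemma continuous_gauss (t : ℝ) : Continuous (gauss t) := by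
  unfold gauss
  fun_prop

end Gauss

section GaussianSmoothing

variable {Ω : Type*} [MeasurableSpace Ω] {μ : Measure Ω} {W : Ω → ℝ} {t : ℝ}

lemma integrable_gauss_sub [IsFiniteMeasure μ] (hW : Measurable W) (ht : 0 < t) (z : ℝ) :
    Integrable (fun ω => gauss t (z - W ω)) μ := by
  refine (integrable_const (gauss t 0)).mono'
    ((continuous_gauss t).measurable.comp (measurable_const.sub hW)).aestronglyMeasurable ?_
  filter_upwards with ω
  rw [Real.norm_eq_abs, abs_of_pos (gauss_pos ht _)]
  exact gauss_le_gauss_zero ht _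

lemma integrable_abs_mul_gauss_sub [IsFiniteMeasure μ] (hW : Measurable W)
    (hW2 : Integrable (fun ω => W ω ^ 2) μ) (ht : 0 < t) (z : ℝ) :
    Integrable (fun ω => |W ω| * gauss t (z - W ω)) μ := by
  have hW1 : Integrable W μ :=
    ((memLp_two_iff_integrable_sq hW.aestronglyMeasurable).2 hW2).integrable one_le_two
  refine (hW1.abs.mul_const (gauss t 0)).mono'
    ((hW.abs.mul ((continuous_gauss t).measurable.comp
      (measurable_const.sub hW))).aestronglyMeasurable) ?_
  filter_upwards with ω
  rw [Real.norm_eq_abs, abs_of_nonneg (mul_nonneg (abs_nonneg _) (gauss_pos ht _).le)]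
  exact mul_le_mul_of_nonneg_left (gauss_le_gauss_zero ht _) (abs_nonneg _)

lemma gauss_add_div_two_le_integral [IsProbabilityMeasure μ] (hW : Measurable W)
    (hW2 : Integrable (fun ω => W ω ^ 2) μ) (ht : 0 < t) {M : ℝ} (hM : 0 < M)
    (hV : 2 * ∫ ω, W ω ^ 2 ∂μ ≤ M ^ 2) (z : ℝ) :
    gauss t (|z| + M) / 2 ≤ ∫ ω, gauss t (z - W ω) ∂μ := by
  set g := gauss t (|z| + M)
  have hpoint : ∀ ω, g * (1 - W ω ^ 2 / M ^ 2) ≤ gauss t (z - W ω) := by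
    intro ω
    rcases le_or_gt (W ω ^ 2) (M ^ 2) with hle | hgt
    · have hWM : |W ω| ≤ M := abs_le_of_sq_le_sq' hle hM.le |> abs_le.2
      have hg : g ≤ gauss t (z - W ω) := by
        refine gauss_le_gauss_of_abs_le ht ?_
        rw [abs_of_nonneg (by positivity : 0 ≤ |z| + M)]
        linarith [abs_sub z (W ω)]
      have : 0 ≤ W ω ^ 2 / M ^ 2 := by positivity
      nlinarith [gauss_pos ht (|z| + M)]
    · have : 1 - W ω ^ 2 / M ^ 2 < 0 := by
        rw [sub_neg, one_lt_div (by positivity)]; exact hgt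
      nlinarith [gauss_pos ht (|z| + M), gauss_pos ht (z - W ω)]
  have hint : ∫ ω, g * (1 - W ω ^ 2 / M ^ 2) ∂μ = g * (1 - (∫ ω, W ω ^ 2 ∂μ) / M ^ 2) := by
    rw [integral_const_mul, integral_sub (integrable_const 1) (hW2.div_const _),
      integral_const, integral_div]
    simp
  have hfrac : (∫ ω, W ω ^ 2 ∂μ) / M ^ 2 ≤ 1 / 2 := by
    rw [div_le_iff₀ (by positivity)]; linarith
  calc g / 2 ≤ g * (1 - (∫ ω, W ω ^ 2 ∂μ) / M ^ 2) := by
        nlinarith [gauss_pos ht (|z| + M)]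
    _ = ∫ ω, g * (1 - W ω ^ 2 / M ^ 2) ∂μ := hint.symm
    _ ≤ ∫ ω, gauss t (z - W ω) ∂μ :=
        integral_mono (((integrable_const 1).sub (hW2.div_const _)).const_mul _)
          (integrable_gauss_sub hW ht z) hpoint

/-- Split at `|W| = R`: below, `|W| ≤ R`; above, `|W| ≤ W² / R` and `z - W` is farther than `r`
from the origin. -/
lemma integral_abs_mul_gauss_sub_le [IsFiniteMeasure μ] (hW : Measurable W)
    (hW2 : Integrable (fun ω => W ω ^ 2) μ) (ht : 0 < t) {z r R : ℝ} (hr : 0 ≤ r)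
    (hR0 : 0 < R) (hR : |z| + r ≤ R) :
    ∫ ω, |W ω| * gauss t (z - W ω) ∂μ
      ≤ R * ∫ ω, gauss t (z - W ω) ∂μ + (∫ ω, W ω ^ 2 ∂μ) / R * gauss t r := by
  have hpoint : ∀ ω, |W ω| * gauss t (z - W ω)
      ≤ R * gauss t (z - W ω) + W ω ^ 2 / R * gauss t r := by
    intro ω
    have hgr := gauss_pos ht r
    have hg := gauss_pos ht (z - W ω)
    rcases le_or_gt |W ω| R with hle | hgt
    · have : 0 ≤ W ω ^ 2 / R * gauss t r := by positivity
      nlinarith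
    · have hfar : gauss t (z - W ω) ≤ gauss t r := by
        refine gauss_le_gauss_of_abs_le ht ?_
        rw [abs_of_nonneg hr]
        linarith [abs_sub_abs_le_abs_sub (W ω) z, abs_sub_comm (W ω) z]
      have hWR : |W ω| ≤ W ω ^ 2 / R := by
        rw [le_div_iff₀ hR0, ← sq_abs]; nlinarith
      nlinarith [abs_nonneg (W ω)]
  calc ∫ ω, |W ω| * gauss t (z - W ω) ∂μ
      ≤ ∫ ω, (R * gauss t (z - W ω) + W ω ^ 2 / R * gauss t r) ∂μ :=
        integral_mono (integrable_abs_mul_gauss_sub hW hW2 ht z)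
          (((integrable_gauss_sub hW ht z).const_mul R).add ((hW2.div_const R).mul_const _))
          hpoint
    _ = R * ∫ ω, gauss t (z - W ω) ∂μ + (∫ ω, W ω ^ 2 ∂μ) / R * gauss t r := by
        rw [integral_add ((integrable_gauss_sub hW ht z).const_mul R)
          ((hW2.div_const R).mul_const _), integral_const_mul, integral_mul_const, integral_div]

lemma abs_integral_score_le [IsFiniteMeasure μ] (hW : Measurable W)
    (hW2 : Integrable (fun ω => W ω ^ 2) μ) (ht : 0 < t) (z : ℝ) :
    |∫ ω, -((z - W ω) / t) * gauss t (z - W ω) ∂μ|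
      ≤ (|z| * ∫ ω, gauss t (z - W ω) ∂μ + ∫ ω, |W ω| * gauss t (z - W ω) ∂μ) / t := by
  have hg := integrable_gauss_sub (μ := μ) hW ht z
  have hWg := integrable_abs_mul_gauss_sub hW hW2 ht z
  calc |∫ ω, -((z - W ω) / t) * gauss t (z - W ω) ∂μ|
      ≤ ∫ ω, |-((z - W ω) / t) * gauss t (z - W ω)| ∂μ := abs_integral_le_integral_abs
    _ ≤ ∫ ω, (|z| * gauss t (z - W ω) + |W ω| * gauss t (z - W ω)) / t ∂μ := by
        refine integral_mono_of_nonneg (Filter.Eventually.of_forall fun _ => abs_nonneg _)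
          ((hg.const_mul _).add hWg |>.div_const _) (Filter.Eventually.of_forall fun ω => ?_)
        dsimp only
        rw [abs_mul, abs_neg, abs_div, abs_of_pos ht, abs_of_pos (gauss_pos ht _),
          div_mul_eq_mul_div, ← add_mul]
        gcongr
        · exact (gauss_pos ht _).le
        · exact abs_sub _ _
    _ = _ := by
        rw [integral_div, integral_add (hg.const_mul _) hWg, integral_const_mul]

/-- The left side is the squared score of the law of `W + N(0, t)` at `z`. -/
lemma score_sq_le [IsProbabilityMeasure μ] (hW : Measurable W)
    (hW2 : Integrable (fun ω => W ω ^ 2) μ) (ht : 0 < t) {M : ℝ} (hM : 0 < M)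
    (hV : 2 * ∫ ω, W ω ^ 2 ∂μ ≤ M ^ 2) (z : ℝ) :
    ((∫ ω, -((z - W ω) / t) * gauss t (z - W ω) ∂μ) / ∫ ω, gauss t (z - W ω) ∂μ) ^ 2
      ≤ ((3 * |z| + 2 * M) / t) ^ 2 := by
  set p := ∫ ω, gauss t (z - W ω) ∂μ
  set R := 2 * |z| + M
  have hR0 : 0 < R := by positivity
  have hlow := gauss_add_div_two_le_integral hW hW2 ht hM hV z
  have hp : 0 < p := lt_of_lt_of_le (by linarith [gauss_pos ht (|z| + M)]) hlow
  have htail := integral_abs_mul_gauss_sub_le hW hW2 ht (r := |z| + M) (by positivity) hR0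
    (by linarith [abs_nonneg z])
  have hVR : (∫ ω, W ω ^ 2 ∂μ) / R * gauss t (|z| + M) ≤ M * p := by
    have hV' : (∫ ω, W ω ^ 2 ∂μ) / R ≤ M / 2 := by
      rw [div_le_iff₀ hR0]; nlinarith [abs_nonneg z]
    have hV0 : 0 ≤ (∫ ω, W ω ^ 2 ∂μ) / R :=
      div_nonneg (integral_nonneg fun _ => sq_nonneg _) hR0.le
    nlinarith [gauss_pos ht (|z| + M)]
  have habs : |(∫ ω, -((z - W ω) / t) * gauss t (z - W ω) ∂μ) / p| ≤ (3 * |z| + 2 * M) / t := by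
    rw [abs_div, abs_of_pos hp, div_le_iff₀ hp]
    refine (abs_integral_score_le hW hW2 ht z).trans ?_
    rw [div_mul_eq_mul_div]
    gcongr
    linarith
  rw [← sq_abs]
  exact pow_le_pow_left₀ (abs_nonneg _) habs 2

end GaussianSmoothing

lemma integral_le_of_le_indicator_Icc {h : ℝ → ℝ} {a C : ℝ} (ha : 0 ≤ a)
    (h0 : ∀ y, 0 ≤ h y) (hle : ∀ y, h y ≤ (Set.Icc (-a) a).indicator (fun _ => C) y) :
    ∫ y, h y ≤ 2 * a * C := by
  have hC : IntegrableOn (fun _ : ℝ => C) (Set.Icc (-a) a) := integrableOn_const (by simp)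
  calc ∫ y, h y ≤ ∫ y, (Set.Icc (-a) a).indicator (fun _ => C) y :=
        integral_mono_of_nonneg (Filter.Eventually.of_forall h0)
          (hC.integrable_indicator measurableSet_Icc) (Filter.Eventually.of_forall hle)
    _ = 2 * a * C := by
        rw [integral_indicator measurableSet_Icc, setIntegral_const,
          Real.volume_real_Icc_of_le (by linarith), smul_eq_mul]
        ring

lemma integral_integral_mul_ite_box_le {F : ℝ → ℝ → ℝ} {a C : ℝ} (ha : 0 ≤ a)
    (hF0 : ∀ x y, 0 ≤ F x y) (hF : ∀ x y, |x| ≤ a → |y| ≤ a → F x y ≤ C) :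
    ∫ x, ∫ y, F x y * (if |x| ≤ a ∧ |y| ≤ a then 1 else 0) ≤ (2 * a) ^ 2 * C := by
  have hbox0 : ∀ x y, 0 ≤ F x y * (if |x| ≤ a ∧ |y| ≤ a then 1 else 0) := by
    intro x y
    split_ifs <;> simp [hF0]
  have hin : ∀ x : ℝ, |x| ≤ a ↔ x ∈ Set.Icc (-a) a := fun _ => abs_le
  rw [sq, mul_assoc]
  refine integral_le_of_le_indicator_Icc ha (fun x => integral_nonneg (hbox0 x)) fun x => ?_
  by_cases hx : |x| ≤ a
  · rw [Set.indicator_of_mem ((hin x).1 hx)]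
    refine integral_le_of_le_indicator_Icc ha (hbox0 x) fun y => ?_
    by_cases hy : |y| ≤ a
    · simp [hx, hy, Set.indicator_of_mem ((hin y).1 hy), hF x y hx hy]
    · simp [hy, Set.indicator_of_notMem (mt (hin y).2 hy)]
  · simp [hx, Set.indicator_of_notMem (mt (hin x).2 hx)]

lemma box_score_bound_le {τ K' B : ℝ} (hτ : 0 < τ) (hK' : 0 ≤ K') (hB : 1 ≤ B) :
    (2 * (B * √τ)) ^ 2 * ((3 * (2 * (B * √τ)) + 2 * √(2 * K' + τ)) / (2 * τ)) ^ 2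
      ≤ 16 * B ^ 4 * √τ * (8 * (3 + 2 * K' / τ) / (√τ * exp 1)) := by
  set X := 3 * (2 * (B * √τ)) + 2 * √(2 * K' + τ)
  have ha : (B * √τ) ^ 2 = B ^ 2 * τ := by rw [mul_pow, sq_sqrt hτ.le]
  have hm : √(2 * K' + τ) ^ 2 = 2 * K' + τ := sq_sqrt (by positivity)
  have hX : X ^ 2 ≤ 72 * B ^ 2 * τ + 16 * K' + 8 * τ := by
    nlinarith [sq_nonneg (3 * (2 * (B * √τ)) - 2 * √(2 * K' + τ))]
  have hB2 : 1 ≤ B ^ 2 := one_le_pow₀ hB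
  have hcoef : (72 * B ^ 2 * τ + 16 * K' + 8 * τ) * exp 1 ≤ 128 * B ^ 2 * (3 * τ + 2 * K') := by
    have h0 : 0 ≤ 72 * B ^ 2 * τ + 16 * K' + 8 * τ := by positivity
    nlinarith [mul_le_mul_of_nonneg_left exp_one_lt_three.le h0,
      mul_le_mul_of_nonneg_right hB2 hτ.le, mul_le_mul_of_nonneg_right hB2 hK']
  calc (2 * (B * √τ)) ^ 2 * (X / (2 * τ)) ^ 2 = B ^ 2 * X ^ 2 / τ := by
        rw [div_pow, mul_pow, ha]
        field_simp
    _ ≤ B ^ 2 * (72 * B ^ 2 * τ + 16 * K' + 8 * τ) / τ := by gcongr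
    _ ≤ 128 * B ^ 4 * (3 * τ + 2 * K') / (τ * exp 1) := by
        rw [div_le_div_iff₀ hτ (by positivity)]
        nlinarith [mul_le_mul_of_nonneg_left hcoef (by positivity : 0 ≤ B ^ 2 * τ)]
    _ = 16 * B ^ 4 * √τ * (8 * (3 + 2 * K' / τ) / (√τ * exp 1)) := by
        field_simp
        ring

theorem stmt19_general (μ : Measure (ℝ × ℝ)) [IsProbabilityMeasure μ] (τ K' : ℝ)
    (hτ : 0 < τ)
    (h1sq : Integrable (fun q : ℝ × ℝ => q.1 ^ 2) μ)
    (h2sq : Integrable (fun q : ℝ × ℝ => q.2 ^ 2) μ)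
    (hK' : ∫ q, ((q : ℝ × ℝ).1 + q.2) ^ 2 ∂μ ≤ K')
    (pZ p'Z : ℝ → ℝ)
    (hpZ : ∀ z, pZ z = ∫ q, gauss (2 * τ) (z - (q.1 + q.2)) ∂μ)
    (hp'Z : ∀ z, p'Z z
      = ∫ q, -((z - (q.1 + q.2)) / (2 * τ)) * gauss (2 * τ) (z - (q.1 + q.2)) ∂μ) :
    ∀ B : ℝ, 1 ≤ B →
      ∫ x, ∫ y, (p'Z (x + y) / pZ (x + y)) ^ 2 *
          (if |x| ≤ B * Real.sqrt τ ∧ |y| ≤ B * Real.sqrt τ then 1 else 0)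
        ≤ 16 * B ^ 4 * Real.sqrt τ * (8 * (3 + 2 * K' / τ) / (Real.sqrt τ * Real.exp 1)) := by
  intro B hB
  have hsum2 : Integrable (fun q : ℝ × ℝ => (q.1 + q.2) ^ 2) μ := by
    refine ((h1sq.add h2sq).const_mul 2).mono' (by fun_prop) (Filter.Eventually.of_forall ?_)
    intro q
    rw [Real.norm_eq_abs, abs_of_nonneg (sq_nonneg _), Pi.add_apply]
    nlinarith [sq_nonneg (q.1 - q.2)]
  have hK'0 : 0 ≤ K' := (integral_nonneg fun _ => sq_nonneg _).trans hK'
  have hscore : ∀ z, (p'Z z / pZ z) ^ 2 ≤ ((3 * |z| + 2 * √(2 * K' + τ)) / (2 * τ)) ^ 2 := by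
    intro z
    rw [hpZ, hp'Z]
    exact score_sq_le (by fun_prop) hsum2 (by positivity) (sqrt_pos.2 (by positivity))
      (by rw [sq_sqrt (by positivity)]; linarith) z
  refine (integral_integral_mul_ite_box_le (by positivity) (fun _ _ => sq_nonneg _)
    fun x y hx hy => (hscore (x + y)).trans ?_).trans (box_score_bound_le hτ hK'0 hB)
  gcongr
  linarith [abs_add_le x y]

/-- Small box L² bound on the score of the sum: for `B ≥ 1`,
`∫∫ ρ̃(x+y)² 1{|x| ≤ B√τ, |y| ≤ B√τ} dx dy ≤ 16B⁴√τ f₁(τ,K')` where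
`f₁(τ,K') = 8(3 + 2K'/τ)/(√τ e)` and `K'` bounds `Var(S+T) ≤ 4K`. -/
theorem stmt19 (μ : Measure (ℝ × ℝ)) [IsProbabilityMeasure μ] (τ K K' : ℝ)
    (hτ : 0 < τ)
    (h1 : Integrable (fun q : ℝ × ℝ => q.1) μ)
    (h2 : Integrable (fun q : ℝ × ℝ => q.2) μ)
    (h1sq : Integrable (fun q : ℝ × ℝ => q.1 ^ 2) μ)
    (h2sq : Integrable (fun q : ℝ × ℝ => q.2 ^ 2) μ)
    (hm1 : ∫ q, (q : ℝ × ℝ).1 ∂μ = 0) (hm2 : ∫ q, (q : ℝ × ℝ).2 ∂μ = 0)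
    (hv1 : ∫ q, (q : ℝ × ℝ).1 ^ 2 ∂μ ≤ K) (hv2 : ∫ q, (q : ℝ × ℝ).2 ^ 2 ∂μ ≤ K)
    (hK' : ∫ q, ((q : ℝ × ℝ).1 + q.2) ^ 2 ∂μ ≤ K') (hK'4 : K' ≤ 4 * K)
    (pZ p'Z : ℝ → ℝ)
    (hpZ : ∀ z, pZ z = ∫ q, gauss (2 * τ) (z - (q.1 + q.2)) ∂μ)
    (hp'Z : ∀ z, p'Z z
      = ∫ q, -((z - (q.1 + q.2)) / (2 * τ)) * gauss (2 * τ) (z - (q.1 + q.2)) ∂μ) :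
    ∀ B : ℝ, 1 ≤ B →
      ∫ x, ∫ y, (p'Z (x + y) / pZ (x + y)) ^ 2 *
          (if |x| ≤ B * Real.sqrt τ ∧ |y| ≤ B * Real.sqrt τ then 1 else 0)
        ≤ 16 * B ^ 4 * Real.sqrt τ * (8 * (3 + 2 * K' / τ) / (Real.sqrt τ * Real.exp 1)) :=
  stmt19_general μ τ K' hτ h1sq h2sq hK' pZ p'Z hpZ hp'Z
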